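/- Consider the one-way epidemic run by n agents under the smoothed scheduler Γ_s with smoothing parameter p ∈ (0,1] and any adaptive adversary: each agent holds a value x ∈ {0,1}, and every interaction (u,v) performs u.x ← max(u.x, v.x). For every constant α > 0 there exists a constant C such that, starting from any configuration in which at least one agent has value 1, after ⌈C·p^{−1}·n·log n⌉ steps all n agents have value 1 with probability 1 − O(n^{−α}). -/

import Mathlib

set_option autoImplicit false

open MeasureTheory ProbabilityTheory
open scoped ENNReal

/-- The randomness of one step of the smoothed scheduler `Γ_s`: whether the interaction is a
uniformly random one, and the uniformly random ordered pair (used only in that case). -/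
structure Step (n : ℕ) where
  isRandom : Bool
  pair : Fin n × Fin n
deriving DecidableEq

instance (n : ℕ) : MeasurableSpace (Step n) := ⊤

/-- The ordered pairs of distinct agents. -/
def distinctPairs (n : ℕ) : Finset (Fin n × Fin n) :=
  Finset.univ.filter fun q => q.1 ≠ q.2

lemma distinctPairs_nonempty {n : ℕ} (hn : 2 ≤ n) : (distinctPairs n).Nonempty := by
  refine ⟨(⟨0, by omega⟩, ⟨1, by omega⟩), ?_⟩
  simp [distinctPairs, Fin.ext_iff]

/-- The distribution of the randomness of one step of `Γ_s` with smoothing parameter `p`. -/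
noncomputable def stepPMF (n : ℕ) (hn : 2 ≤ n) (p : ℝ≥0∞) (hp : p ≤ 1) : PMF (Step n) :=
  (PMF.bernoulli p.toNNReal (by simpa using ENNReal.toNNReal_mono ENNReal.one_ne_top hp)).bind fun c =>
    (PMF.uniformOfFinset (distinctPairs n) (distinctPairs_nonempty hn)).map fun pr => ⟨c, pr⟩

/-- An adaptive adversary: a function from the full history of the execution (which is
determined by the randomness of the past steps) to the next ordered interaction. -/
abbrev Adversary (n : ℕ) := (k : ℕ) → (Fin k → Step n) → Fin n × Fin n

/-- The pair that actually interacts at step `k`. -/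
def chosenPair {n : ℕ} (adv : Adversary n) (s : ℕ → Step n) (k : ℕ) : Fin n × Fin n :=
  if (s k).isRandom then (s k).pair else adv k fun j : Fin k => s j

/-- The one-way epidemic: each agent holds a value in `{0,1}` (`true` = infected) and each
interaction `(u,v)` performs `u.x ← max(u.x, v.x)`. -/
def epidemicExec {n : ℕ} (adv : Adversary n) (x0 : Fin n → Bool) (s : ℕ → Step n) :
    ℕ → Fin n → Bool
  | 0 => x0
  | k + 1 =>
    let C := epidemicExec adv x0 s k
    let pr := chosenPair adv s k
    Function.update C pr.1 (C pr.1 || C pr.2)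

/-!
Let `j` be the number of infected agents. Whatever the adversary does, a step is, with
probability `p j (n - j) / (n (n - 1))`, a random interaction of an uninfected initiator with
an infected responder, which raises `j` by one, and no step lowers `j`. For the potential
`W j = ∏_{j ≤ i < n} (1 - (n - 1) / (2 i (n - i)))⁻¹` these two facts give
`E[W j' - 1] ≤ (1 - p / (2 n)) (W j - 1)` for the count `j'` after the step, hence
`E[W - 1] ≤ (1 - p / (2 n))^T W 1` after `T` steps. While some agent is uninfected `W - 1 ≥ 1`,
and the harmonic bound gives `W 1 ≤ e² n²`, so by Markov's inequality the epidemic is unfinished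
with probability at most `e^(2 - p T / (2 n)) n²`, which is `e² n^(-α)` for
`T = ⌈(2α + 4) p⁻¹ n log n⌉`.
-/

def Step.equivProd (n : ℕ) : Step n ≃ Bool × (Fin n × Fin n) :=
  ⟨fun v => (v.isRandom, v.pair), fun x => ⟨x.1, x.2⟩, fun _ => rfl, fun _ => rfl⟩

instance (n : ℕ) : Fintype (Step n) := Fintype.ofEquiv _ (Step.equivProd n).symm

open Finset Real

section HistoryExpectation

variable {S : Type*} [Fintype S] (q : S → ℝ)

def histExpect (k : ℕ) (F : (Fin k → S) → ℝ) : ℝ := ∑ h, (∏ i, q (h i)) * F h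

lemma histExpect_zero (F : (Fin 0 → S) → ℝ) : histExpect q 0 F = F Fin.elim0 := by
  rw [histExpect, Fintype.sum_unique, Fin.prod_univ_zero, one_mul]
  exact congrArg F (Subsingleton.elim _ _)

lemma histExpect_succ {k : ℕ} (F : (Fin (k + 1) → S) → ℝ) :
    histExpect q (k + 1) F = histExpect q k fun h => ∑ s, q s * F (Fin.snoc h s) := by
  rw [histExpect, ← (Fin.snocEquiv fun _ => S).sum_comp, Fintype.sum_prod_type_right]
  refine sum_congr rfl fun h _ => ?_
  rw [mul_sum]
  refine sum_congr rfl fun s _ => ?_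
  simp only [Fin.snocEquiv_apply, Fin.prod_univ_castSucc, Fin.snoc_castSucc, Fin.snoc_last]
  rw [mul_assoc]
  rfl

lemma histExpect_const_mul {k : ℕ} (c : ℝ) (F : (Fin k → S) → ℝ) :
    histExpect q k (fun h => c * F h) = c * histExpect q k F := by
  simp only [histExpect, mul_sum]
  exact sum_congr rfl fun h _ => by ring

variable {q}

lemma histExpect_mono (hq : ∀ s, 0 ≤ q s) {k : ℕ} {F G : (Fin k → S) → ℝ}
    (hFG : ∀ h, F h ≤ G h) : histExpect q k F ≤ histExpect q k G :=
  sum_le_sum fun h _ => mul_le_mul_of_nonneg_left (hFG h) (prod_nonneg fun i _ => hq (h i))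

lemma histExpect_le_pow_mul (hq : ∀ s, 0 ≤ q s) {β : ℝ} (hβ : 0 ≤ β)
    (Φ : (k : ℕ) → (Fin k → S) → ℝ)
    (hΦ : ∀ k h, ∑ s, q s * Φ (k + 1) (Fin.snoc h s) ≤ β * Φ k h) (k : ℕ) :
    histExpect q k (Φ k) ≤ β ^ k * Φ 0 Fin.elim0 := by
  induction k with
  | zero => simp [histExpect_zero]
  | succ k ih =>
    calc histExpect q (k + 1) (Φ (k + 1)) ≤ histExpect q k fun h => β * Φ k h := by
          rw [histExpect_succ]
          exact histExpect_mono hq (hΦ k)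
      _ ≤ β * (β ^ k * Φ 0 Fin.elim0) := by
          rw [histExpect_const_mul]
          exact mul_le_mul_of_nonneg_left ih hβ
      _ = β ^ (k + 1) * Φ 0 Fin.elim0 := by ring

lemma sum_filter_prod_le_histExpect (hq : ∀ s, 0 ≤ q s) {k : ℕ} (E : (Fin k → S) → Prop)
    [DecidablePred E] {F : (Fin k → S) → ℝ} (hF0 : ∀ h, 0 ≤ F h)
    (hF1 : ∀ h, E h → 1 ≤ F h) :
    ∑ h with E h, ∏ i, q (h i) ≤ histExpect q k F := by
  rw [histExpect, sum_filter]
  refine sum_le_sum fun h _ => ?_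
  have hprod : 0 ≤ ∏ i, q (h i) := prod_nonneg fun i _ => hq (h i)
  split_ifs with hE
  · exact le_mul_of_one_le_right hprod (hF1 h hE)
  · exact mul_nonneg hprod (hF0 h)

end HistoryExpectation

lemma measure_history_eq {Ω S : Type*} [MeasurableSpace Ω] {μ : Measure Ω} [Fintype S]
    [MeasurableSpace S] [MeasurableSingletonClass S] (q : PMF S) {X : ℕ → Ω → S}
    (hX : ∀ j, Measurable (X j)) (hind : iIndepFun X μ)
    (hlaw : ∀ j, μ.map (X j) = q.toMeasure)
    (k : ℕ) (E : (Fin k → S) → Prop) [DecidablePred E] :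
    μ {ω | E fun i => X i ω} = ENNReal.ofReal (∑ h with E h, ∏ i, (q (h i)).toReal) := by
  have hlaw_k : μ.map (fun ω (i : Fin k) => X i ω) = Measure.pi fun _ => q.toMeasure := by
    rw [iIndepFun.map_fun_eq_pi_map (f := fun i : Fin k => X i) (fun i => (hX i).aemeasurable)
      (hind.precomp Fin.val_injective)]
    simp only [hlaw]
  have hset :
      {ω | E fun i => X i ω} = (fun ω (i : Fin k) => X i ω) ⁻¹' ↑(univ.filter E) := by
    ext
    simp
  have hmeas : Measurable fun ω (i : Fin k) => X i ω := measurable_pi_lambda _ fun i => hX i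
  rw [hset, ← Measure.map_apply hmeas (Set.toFinite _).measurableSet, hlaw_k,
    ← sum_measure_singleton,
    ENNReal.ofReal_sum_of_nonneg fun h _ => prod_nonneg fun i _ => ENNReal.toReal_nonneg]
  refine sum_congr rfl fun h _ => ?_
  rw [Measure.pi_singleton, ENNReal.ofReal_prod_of_nonneg fun i _ => ENNReal.toReal_nonneg]
  refine prod_congr rfl fun i _ => ?_
  rw [PMF.toMeasure_apply_singleton _ _ (measurableSet_singleton _),
    ENNReal.ofReal_toReal (PMF.apply_ne_top _ _)]

section Epidemic

variable {n : ℕ}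

def numInfected (C : Fin n → Bool) : ℕ := #{v | C v = true}

def interact (C : Fin n → Bool) (pr : Fin n × Fin n) : Fin n → Bool :=
  Function.update C pr.1 (C pr.1 || C pr.2)

lemma numInfected_le (C : Fin n → Bool) : numInfected C ≤ n :=
  (card_filter_le _ _).trans_eq (card_fin n)

lemma numInfected_lt_of_not_forall {C : Fin n → Bool} (h : ¬ ∀ v, C v = true) :
    numInfected C < n := by
  obtain ⟨v, hv⟩ := not_forall.mp h
  exact (card_lt_card (filter_ssubset.mpr ⟨v, mem_univ v, hv⟩)).trans_eq (card_fin n)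

lemma interact_apply_of_true (C : Fin n → Bool) (pr : Fin n × Fin n) {v : Fin n}
    (hv : C v = true) : interact C pr v = true := by
  rcases eq_or_ne v pr.1 with rfl | hne
  · simp [interact, hv]
  · rwa [interact, Function.update_of_ne hne]

lemma numInfected_le_interact (C : Fin n → Bool) (pr : Fin n × Fin n) :
    numInfected C ≤ numInfected (interact C pr) :=
  card_le_card fun v hv => by
    simp only [mem_filter, mem_univ, true_and] at hv ⊢
    exact interact_apply_of_true C pr hv

lemma numInfected_interact_of_spread {C : Fin n → Bool} {u w : Fin n} (hu : C u = false)
    (hw : C w = true) : numInfected (interact C (u, w)) = numInfected C + 1 := by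
  have hfilter : univ.filter (fun v => interact C (u, w) v = true) =
      insert u (univ.filter fun v => C v = true) := by
    ext v
    simp only [mem_filter, mem_univ, true_and, mem_insert]
    rcases eq_or_ne v u with rfl | hne
    · simp [interact, hw]
    · simp [interact, hne]
  rw [numInfected, hfilter, card_insert_of_notMem (by simp [hu]), numInfected]

def config (adv : Adversary n) (x0 : Fin n → Bool) :
    (k : ℕ) → (Fin k → Step n) → Fin n → Bool
  | 0, _ => x0
  | k + 1, h =>
    let v := h (Fin.last k)
    interact (config adv x0 k (Fin.init h)) (if v.isRandom then v.pair else adv k (Fin.init h))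

variable (adv : Adversary n) (x0 : Fin n → Bool)

lemma config_snoc {k : ℕ} (h : Fin k → Step n) (v : Step n) :
    config adv x0 (k + 1) (Fin.snoc h v) =
      interact (config adv x0 k h) (if v.isRandom then v.pair else adv k h) := by
  simp only [config, Fin.init_snoc, Fin.snoc_last]

lemma epidemicExec_eq_config (s : ℕ → Step n) (k : ℕ) :
    epidemicExec adv x0 s k = config adv x0 k fun i => s i := by
  induction k with
  | zero => rfl
  | succ k ih =>
    rw [epidemicExec, ih]
    rfl

lemma one_le_numInfected_config (hx0 : ∃ v, x0 v = true) :
    ∀ k (h : Fin k → Step n), 1 ≤ numInfected (config adv x0 k h)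
  | 0, _ => by
    obtain ⟨v, hv⟩ := hx0
    exact card_pos.mpr ⟨v, mem_filter.mpr ⟨mem_univ v, hv⟩⟩
  | k + 1, h =>
    (one_le_numInfected_config hx0 k (Fin.init h)).trans (numInfected_le_interact _ _)

end Epidemic

section Weight

-- Division by zero makes `decay n 0 = 0`, so `weight n 0 = weight n 1`.
noncomputable def decay (n i : ℕ) : ℝ := ((n : ℝ) - 1) / (2 * i * (n - i))

noncomputable def weight (n j : ℕ) : ℝ := ∏ i ∈ Ico j n, (1 - decay n i)⁻¹

variable {n : ℕ}

lemma decay_nonneg {i : ℕ} (hi : i < n) : 0 ≤ decay n i := by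
  have hin : (i : ℝ) < n := by exact_mod_cast hi
  have hn : (1 : ℝ) ≤ n := by exact_mod_cast (by omega : 1 ≤ n)
  exact div_nonneg (by linarith) (mul_nonneg (by positivity) (by linarith))

lemma decay_le_half {i : ℕ} (hi : i < n) : decay n i ≤ 1 / 2 := by
  rcases Nat.eq_zero_or_pos i with rfl | hi1
  · simp [decay]
  have hin : (i : ℝ) + 1 ≤ n := by exact_mod_cast hi
  have hi1' : (1 : ℝ) ≤ i := by exact_mod_cast hi1
  rw [decay, div_le_iff₀ (by nlinarith)]
  nlinarith [mul_nonneg (sub_nonneg.mpr hi1') (sub_nonneg.mpr hin)]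

lemma decay_pred_self (hn : 2 ≤ n) : decay n (n - 1) = 1 / 2 := by
  have hn' : (2 : ℝ) ≤ n := by exact_mod_cast hn
  rw [decay, Nat.cast_sub (by omega), Nat.cast_one, sub_sub_cancel, mul_one]
  field_simp
  exact div_self (by linarith)

lemma weight_succ {j : ℕ} (hj : j < n) : weight n (j + 1) = (1 - decay n j) * weight n j := by
  have hpos : 1 - decay n j ≠ 0 := by linarith [decay_le_half hj]
  rw [weight, weight, prod_eq_prod_Ico_succ_bot hj, mul_inv_cancel_left₀ hpos]

lemma weight_eq_one_of_le {j : ℕ} (hj : n ≤ j) : weight n j = 1 := by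
  rw [weight, Ico_eq_empty_of_le hj, prod_empty]

lemma one_le_weight (n j : ℕ) : 1 ≤ weight n j :=
  one_le_prod fun i hi => by
    have hi : i < n := (mem_Ico.mp hi).2
    exact (one_le_inv₀ (by linarith [decay_le_half hi])).mpr (by linarith [decay_nonneg hi])

lemma weight_antitone : Antitone (weight n) := by
  refine antitone_nat_of_succ_le fun j => ?_
  rcases lt_or_ge j n with hj | hj
  · rw [weight_succ hj]
    exact mul_le_of_le_one_left (zero_le_one.trans (one_le_weight n j))
      (by linarith [decay_nonneg hj])
  · rw [weight_eq_one_of_le hj, weight_eq_one_of_le (hj.trans j.le_succ)]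

lemma two_le_weight (hn : 2 ≤ n) {j : ℕ} (hj : j < n) : 2 ≤ weight n j := by
  have hlast : weight n (n - 1) = 2 := by
    have h := weight_succ (n := n) (j := n - 1) (by omega)
    rw [Nat.sub_add_cancel (by omega), decay_pred_self hn, weight_eq_one_of_le le_rfl] at h
    linarith
  exact hlast ▸ weight_antitone (by omega : j ≤ n - 1)

lemma inv_one_sub_le_exp_two_mul {x : ℝ} (h0 : 0 ≤ x) (h1 : x ≤ 1 / 2) :
    (1 - x)⁻¹ ≤ exp (2 * x) := by
  rw [inv_le_iff_one_le_mul₀ (by linarith)]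
  calc (1 : ℝ) ≤ (1 + 2 * x) * (1 - x) := by nlinarith
    _ ≤ exp (2 * x) * (1 - x) :=
      mul_le_mul_of_nonneg_right (by linarith [add_one_le_exp (2 * x)]) (by linarith)

lemma two_mul_decay_le {i : ℕ} (hi1 : 1 ≤ i) (hi : i < n) :
    2 * decay n i ≤ (i : ℝ)⁻¹ + ((n - i : ℕ) : ℝ)⁻¹ := by
  have hi1' : (1 : ℝ) ≤ i := by exact_mod_cast hi1
  have hin : (i : ℝ) < n := by exact_mod_cast hi
  rw [decay, Nat.cast_sub hi.le]
  have : (0 : ℝ) < n - i := by linarith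
  field_simp
  linarith

lemma sum_Ico_one_inv_le (n : ℕ) : ∑ i ∈ Ico 1 n, (i : ℝ)⁻¹ ≤ 1 + log n := by
  rcases Nat.eq_zero_or_pos n with rfl | hn
  · simp
  obtain ⟨m, rfl⟩ : ∃ m, n = m + 1 := ⟨n - 1, by omega⟩
  have hlog : log m ≤ log (m + 1 : ℕ) := by
    rcases Nat.eq_zero_or_pos m with rfl | hm
    · simp
    · exact log_le_log (by exact_mod_cast hm) (by simp)
  have h := harmonic_le_one_add_log m
  rw [harmonic_eq_sum_Icc] at h
  push_cast at h
  rw [Ico_add_one_right_eq_Icc]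
  linarith

lemma sum_two_mul_decay_le (n : ℕ) : ∑ i ∈ Ico 1 n, 2 * decay n i ≤ 2 * (1 + log n) := by
  have hreflect :
      ∑ i ∈ Ico 1 n, ((n - i : ℕ) : ℝ)⁻¹ = ∑ i ∈ Ico 1 n, (i : ℝ)⁻¹ := by
    simpa using sum_Ico_reflect (fun i => (i : ℝ)⁻¹) 1 (n := n) (m := n) (by omega)
  calc ∑ i ∈ Ico 1 n, 2 * decay n i
      ≤ ∑ i ∈ Ico 1 n, ((i : ℝ)⁻¹ + ((n - i : ℕ) : ℝ)⁻¹) :=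
        sum_le_sum fun i hi => two_mul_decay_le (mem_Ico.mp hi).1 (mem_Ico.mp hi).2
    _ ≤ 2 * (1 + log n) := by
        rw [sum_add_distrib, hreflect]
        linarith [sum_Ico_one_inv_le n]

lemma weight_one_le (n : ℕ) : weight n 1 ≤ exp (2 * (1 + log n)) :=
  calc weight n 1 ≤ ∏ i ∈ Ico 1 n, exp (2 * decay n i) :=
        prod_le_prod (fun i hi => inv_nonneg.mpr (by linarith [decay_le_half (mem_Ico.mp hi).2]))
          fun i hi => inv_one_sub_le_exp_two_mul (decay_nonneg (mem_Ico.mp hi).2)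
            (decay_le_half (mem_Ico.mp hi).2)
    _ = exp (∑ i ∈ Ico 1 n, 2 * decay n i) := (exp_sum _ _).symm
    _ ≤ exp (2 * (1 + log n)) := exp_le_exp.mpr (sum_two_mul_decay_le n)

end Weight

lemma sum_mul_weight_le {S : Type*} [Fintype S] [DecidableEq S] {q : S → ℝ}
    (hq0 : ∀ s, 0 ≤ q s) (hq1 : ∑ s, q s = 1) (G : Finset S) {g : S → ℕ} {n j : ℕ}
    (hj : j < n) (hg : ∀ s, j ≤ g s) (hgG : ∀ s ∈ G, j + 1 ≤ g s) :
    ∑ s, q s * weight n (g s) ≤ (1 - (∑ s ∈ G, q s) * decay n j) * weight n j := by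
  have hG : ∑ s ∈ G, q s * weight n (g s) ≤
      (∑ s ∈ G, q s) * ((1 - decay n j) * weight n j) := by
    rw [sum_mul, ← weight_succ hj]
    exact sum_le_sum fun s hs => mul_le_mul_of_nonneg_left (weight_antitone (hgG s hs)) (hq0 s)
  have hGc : ∑ s ∈ Gᶜ, q s * weight n (g s) ≤ (∑ s ∈ Gᶜ, q s) * weight n j := by
    rw [sum_mul]
    exact sum_le_sum fun s _ => mul_le_mul_of_nonneg_left (weight_antitone (hg s)) (hq0 s)
  have hGc_mass : ∑ s ∈ Gᶜ, q s = 1 - ∑ s ∈ G, q s := by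
    rw [← hq1, ← sum_add_sum_compl G q]
    ring
  rw [hGc_mass] at hGc
  rw [← sum_add_sum_compl G]
  calc _ ≤ (∑ s ∈ G, q s) * ((1 - decay n j) * weight n j)
        + (1 - ∑ s ∈ G, q s) * weight n j := add_le_add hG hGc
    _ = _ := by ring

section StepDistribution

variable {n : ℕ} (hn : 2 ≤ n) (P : ℝ≥0∞) (hP : P ≤ 1)

lemma sum_stepPMF_toReal : ∑ v, (stepPMF n hn P hP v).toReal = 1 := by
  have h := (stepPMF n hn P hP).tsum_coe
  rw [tsum_fintype] at h
  rw [← ENNReal.toReal_sum fun v _ => PMF.apply_ne_top _ v, h, ENNReal.toReal_one]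

lemma stepPMF_toReal_random {u w : Fin n} (huw : u ≠ w) :
    (stepPMF n hn P hP ⟨true, (u, w)⟩).toReal = P.toReal / (n * (n - 1)) := by
  have hcard : ((distinctPairs n).card : ℝ) = n * (n - 1) := by
    have : distinctPairs n = univ.offDiag := by
      ext q
      simp [distinctPairs]
    rw [this, offDiag_card, card_univ, Fintype.card_fin, Nat.cast_sub (Nat.le_mul_self n)]
    push_cast
    ring
  have hmem : (u, w) ∈ distinctPairs n := by simp [distinctPairs, huw]
  simp only [stepPMF]
  simp [PMF.bind_apply, PMF.map_apply, PMF.uniformOfFinset_apply]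
  have hber : ∀ h, PMF.bernoulli P.toNNReal h true = P := fun h => by
    simp [PMF.bernoulli_apply, ENNReal.coe_toNNReal (ne_top_of_le_ne_top ENNReal.one_ne_top hP)]
  rw [if_pos hmem, ENNReal.toReal_mul, ENNReal.toReal_inv, ENNReal.toReal_natCast, hcard,
    div_eq_mul_inv]
  exact congrArg (·.toReal * _) (hber _)

def spreadingSteps (C : Fin n → Bool) : Finset (Step n) :=
  ((univ.filter fun u => C u = false) ×ˢ (univ.filter fun w => C w = true)).map
    ⟨Step.mk true, fun _ _ h => (Step.mk.inj h).2⟩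

lemma sum_stepPMF_spreadingSteps (C : Fin n → Bool) :
    ∑ v ∈ spreadingSteps C, (stepPMF n hn P hP v).toReal =
      P.toReal * (((n : ℝ) - numInfected C) * numInfected C) / (n * (n - 1)) := by
  have hcompl : #{u | C u = false} = n - numInfected C := by
    have := card_filter_add_card_filter_not (s := univ) fun u : Fin n => C u = true
    simp only [card_univ, Fintype.card_fin, Bool.not_eq_true] at this
    rw [numInfected]
    omega
  have hterm : ∀ pr ∈ (univ.filter fun u => C u = false) ×ˢ (univ.filter fun w => C w = true),
      (stepPMF n hn P hP ⟨true, pr⟩).toReal = P.toReal / (n * (n - 1)) := by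
    rintro ⟨u, w⟩ hpr
    simp only [mem_product, mem_filter, mem_univ, true_and] at hpr
    exact stepPMF_toReal_random hn P hP fun h => by simp [h, hpr.2] at hpr
  rw [spreadingSteps, sum_map]
  refine (sum_congr rfl hterm).trans ?_
  rw [sum_const, card_product, hcompl,
    nsmul_eq_mul, Nat.cast_mul, Nat.cast_sub (numInfected_le C), numInfected]
  ring

lemma sum_stepPMF_mul_weight_interact_le {C : Fin n → Bool} (hC : 1 ≤ numInfected C)
    (a : Fin n × Fin n) :
    ∑ v : Step n, (stepPMF n hn P hP v).toReal *
        (weight n (numInfected (interact C (if v.isRandom then v.pair else a))) - 1)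
      ≤ (1 - P.toReal / (2 * n)) * (weight n (numInfected C) - 1) := by
  have hq0 : ∀ v, 0 ≤ (stepPMF n hn P hP v).toReal := fun _ => ENNReal.toReal_nonneg
  have hg : ∀ v : Step n,
      numInfected C ≤ numInfected (interact C (if v.isRandom then v.pair else a)) :=
    fun v => numInfected_le_interact C _
  rcases (numInfected_le C).lt_or_eq with hj | hj
  · have hgG : ∀ v ∈ spreadingSteps C,
        numInfected C + 1 ≤ numInfected (interact C (if v.isRandom then v.pair else a)) := by
      intro v hv
      obtain ⟨⟨u, w⟩, hmem, rfl⟩ := mem_map.mp hv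
      simp only [mem_product, mem_filter, mem_univ, true_and] at hmem
      exact (numInfected_interact_of_spread hmem.1 hmem.2).ge
    have hrate : (∑ v ∈ spreadingSteps C, (stepPMF n hn P hP v).toReal) *
        decay n (numInfected C) = P.toReal / (2 * n) := by
      have hj0 : (numInfected C : ℝ) ≠ 0 := by positivity
      have hjn : (n : ℝ) - numInfected C ≠ 0 := sub_ne_zero.mpr (by exact_mod_cast hj.ne')
      have hn1 : (n : ℝ) - 1 ≠ 0 := sub_ne_zero.mpr (by exact_mod_cast (by omega : n ≠ 1))
      rw [sum_stepPMF_spreadingSteps, decay]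
      field_simp
    have hdrift := sum_mul_weight_le hq0 (sum_stepPMF_toReal hn P hP) _ hj hg hgG
    rw [hrate] at hdrift
    have hP0 : 0 ≤ P.toReal / (2 * n) := by positivity
    simp only [mul_sub, mul_one, sum_sub_distrib, sum_stepPMF_toReal]
    nlinarith [one_le_weight n (numInfected C)]
  · have hself : weight n n = 1 := weight_eq_one_of_le le_rfl
    have hgn : ∀ v : Step n, numInfected (interact C (if v.isRandom then v.pair else a)) = n :=
      fun v => le_antisymm (numInfected_le _) (hj.symm.le.trans (hg v))
    rw [hj, hself, sub_self, mul_zero]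
    exact (sum_eq_zero fun v _ => by rw [hgn v, hself, sub_self, mul_zero]).le

end StepDistribution

lemma measure_not_all_infected_le {n : ℕ} (hn : 2 ≤ n) (P : ℝ≥0∞) (hP : P ≤ 1)
    {Ω : Type*} [MeasurableSpace Ω] {μ : Measure Ω} {steps : ℕ → Ω → Step n}
    (hmeas : ∀ j, Measurable (steps j)) (hind : iIndepFun steps μ)
    (hlaw : ∀ j, μ.map (steps j) = (stepPMF n hn P hP).toMeasure)
    (adv : Adversary n) {x0 : Fin n → Bool} (hx0 : ∃ v, x0 v = true) (T : ℕ) :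
    μ {ω | ¬ ∀ v, epidemicExec adv x0 (fun j => steps j ω) T v = true} ≤
      ENNReal.ofReal ((1 - P.toReal / (2 * n)) ^ T * weight n 1) := by
  classical
  set q := fun v => (stepPMF n hn P hP v).toReal
  have hq0 : ∀ v, 0 ≤ q v := fun _ => ENNReal.toReal_nonneg
  have hβ : 0 ≤ 1 - P.toReal / (2 * n) := by
    have hP1 : P.toReal ≤ 1 := ENNReal.toReal_le_of_le_ofReal zero_le_one (by simpa using hP)
    have hn' : (2 : ℝ) ≤ n := by exact_mod_cast hn
    rw [sub_nonneg, div_le_one (by positivity)]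
    linarith
  let Φ : (k : ℕ) → (Fin k → Step n) → ℝ := fun k h =>
    weight n (numInfected (config adv x0 k h)) - 1
  simp_rw [epidemicExec_eq_config]
  rw [measure_history_eq (stepPMF n hn P hP) hmeas hind hlaw T
    fun h => ¬ ∀ v, config adv x0 T h v = true]
  refine ENNReal.ofReal_le_ofReal ?_
  calc ∑ h with ¬ ∀ v, config adv x0 T h v = true, ∏ i, q (h i) ≤ histExpect q T (Φ T) :=
        sum_filter_prod_le_histExpect hq0 _ (fun h => sub_nonneg.mpr (one_le_weight _ _))
          fun h hbad => by linarith [two_le_weight hn (numInfected_lt_of_not_forall hbad)]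
    _ ≤ (1 - P.toReal / (2 * n)) ^ T * Φ 0 Fin.elim0 := by
        refine histExpect_le_pow_mul hq0 hβ Φ (fun k h => ?_) T
        simp only [Φ, config_snoc]
        exact sum_stepPMF_mul_weight_interact_le hn P hP
          (one_le_numInfected_config adv x0 hx0 k h) (adv k h)
    _ ≤ (1 - P.toReal / (2 * n)) ^ T * weight n 1 := by
        refine mul_le_mul_of_nonneg_left ?_ (pow_nonneg hβ T)
        have := weight_antitone (n := n) (one_le_numInfected_config adv x0 hx0 0 Fin.elim0)
        simp only [Φ]
        linarith

lemma one_sub_pow_mul_weight_one_le {n : ℕ} (hn : 2 ≤ n) {p : ℝ} (hp0 : 0 < p) (hp1 : p ≤ 1)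
    (α : ℝ) :
    (1 - p / (2 * n)) ^ ⌈(2 * α + 4) * p⁻¹ * n * log n⌉₊ * weight n 1 ≤
      exp 2 * (n : ℝ) ^ (-α) := by
  set T := ⌈(2 * α + 4) * p⁻¹ * n * log n⌉₊
  have hn' : (2 : ℝ) ≤ n := by exact_mod_cast hn
  have hδ : 0 ≤ p / (2 * n) := div_nonneg hp0.le (by positivity)
  have hδ1 : p / (2 * n) ≤ 1 := by
    rw [div_le_one (by positivity)]
    linarith
  have hT : (α + 2) * log n ≤ p / (2 * n) * T :=
    calc (α + 2) * log n = p / (2 * n) * ((2 * α + 4) * p⁻¹ * n * log n) := by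
          field_simp
          ring
      _ ≤ p / (2 * n) * T := mul_le_mul_of_nonneg_left (Nat.le_ceil _) hδ
  calc (1 - p / (2 * n)) ^ T * weight n 1
      ≤ exp (-(p / (2 * n))) ^ T * exp (2 * (1 + log n)) :=
        mul_le_mul (pow_le_pow_left₀ (by linarith) (one_sub_le_exp_neg _) T) (weight_one_le n)
          (zero_le_one.trans (one_le_weight n 1)) (pow_nonneg (exp_pos _).le T)
    _ = exp (2 + 2 * log n - p / (2 * n) * T) := by
        rw [← exp_nat_mul, ← exp_add]
        ring_nf
    _ ≤ exp (2 - α * log n) := exp_le_exp.mpr (by linarith)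
    _ = exp 2 * (n : ℝ) ^ (-α) := by
        rw [rpow_def_of_pos (by positivity), ← exp_add]
        ring_nf

/-- For the one-way epidemic under `Γ_s` with smoothing parameter `p` and
any adaptive adversary: for every `α > 0` there is a constant `C` such that, for all large
enough `n`, starting from any configuration with at least one infected agent, after
`⌈C·p⁻¹·n·log n⌉` steps all agents are infected with probability `1 − O(n^{−α})`. -/
theorem one_way_epidemic_smoothed :
    ∀ α : ℝ, 0 < α →
    ∃ (C Cf : ℝ) (n₀ : ℕ), 0 < C ∧ 0 < Cf ∧
      ∀ (n : ℕ), n₀ ≤ n → ∀ (hn : 2 ≤ n) (p : ℝ) (hp0 : 0 < p) (hp1 : p ≤ 1),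
      ∀ (Ω : Type) [MeasurableSpace Ω] (μ : Measure Ω) [IsProbabilityMeasure μ],
      ∀ (steps : ℕ → Ω → Step n),
        (∀ j, Measurable (steps j)) →
        iIndepFun steps μ →
        (∀ j, μ.map (steps j) =
          (stepPMF n hn (ENNReal.ofReal p) (ENNReal.ofReal_le_one.mpr hp1)).toMeasure) →
      ∀ (adv : Adversary n), (∀ j h, (adv j h).1 ≠ (adv j h).2) →
      ∀ (x0 : Fin n → Bool), (∃ v, x0 v = true) →
        μ {ω | ¬ ∀ v, epidemicExec adv x0 (fun j => steps j ω)
              ⌈C * p⁻¹ * n * Real.log n⌉₊ v = true} ≤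
          ENNReal.ofReal (Cf * (n : ℝ) ^ (-α)) := by
  intro α hα
  refine ⟨2 * α + 4, exp 2, 0, by linarith, exp_pos 2, ?_⟩
  intro n _ hn p hp0 hp1 Ω _ μ _ steps hmeas hind hlaw adv _ x0 hx0
  refine (measure_not_all_infected_le hn _ _ hmeas hind hlaw adv hx0 _).trans
    (ENNReal.ofReal_le_ofReal ?_)
  rw [ENNReal.toReal_ofReal hp0.le]
  exact one_sub_pow_mul_weight_one_le hn hp0 hp1 α
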